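/- Let D ≥ 2 and n ≥ 2 be integers, Γ : Fin n → Fin n → ℕ an adjacency matrix (symmetric with zero diagonal), and let V₁, V₂ be disjoint nonempty subsets with V₁ ∪ V₂ = Fin n. Assume that for every i ∈ V₁ the total edge weight ∑_{j∈V₂} Γ(i,j) is coprime to D, and for every j ∈ V₂ the weight ∑_{i∈V₁} Γ(i,j) is coprime to D. Call c : Fin n → ZMod D a codeword if ∑_{i∈V₁} c(i) = 0 and ∑_{j∈V₂} c(j) = 0 in ZMod D. Then for all codewords c and c', every site i ∈ Fin n, and every pair (μ,ν) ∈ ZMod D × ZMod D with (μ,ν) ≠ (0,0), the one-site Pauli matrix element between the corresponding graph basis vectors vanishes: ∑_{k : Fin n → ZMod D} conj(v_{c'}(k)) · exp((2πi/D)·(ν·(k(i)+μ)).val) · v_c(k + μ·δ_i) = 0. (Partition theorem: the span of the D^{n−2} codeword graph basis states is a nondegenerate additive graph code of distance 2, saturating the quantum Singleton bound.) -/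

import Mathlib

/-!
Write `ψ` for the standard additive character of `ZMod D`, so that `v_c(k) = ψ(q(k) + c ⬝ᵥ k)`
with `q` the edge form of `Γ`. Since `Γ` is symmetric with zero diagonal, shifting `k` by `μ δ_i`
changes `q` only by the linear term `μ (Γ i ⬝ᵥ k)`, so each summand is a constant times
`ψ(a ⬝ᵥ k)` with `a = ν δ_i + μ Γ i + (c - c')`, and the sum over `k` vanishes unless `a = 0`.
If `a = 0`, summing it over the part not containing `i` leaves `μ` times a coprime edge weight
(the codewords contribute nothing), so `μ = 0`; summing over the part containing `i` then
gives `ν = 0`.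
-/

/-- The (unnormalized) graph basis vector `v_c` of the multigraph with adjacency
matrix `Γ`, evaluated at the computational basis state `k`. -/
noncomputable def graphBasisVec (D n : ℕ) (Γ : Fin n → Fin n → ℕ) (c : Fin n → ZMod D)
    (k : Fin n → ZMod D) : ℂ :=
  Complex.exp ((2 * (Real.pi : ℂ) * Complex.I / (D : ℂ)) *
    ((∑ p ∈ Finset.univ.filter (fun p : Fin n × Fin n => p.1 < p.2),
        (Γ p.1 p.2 : ℂ) * ((k p.1).val : ℂ) * ((k p.2).val : ℂ)) +
      ∑ l, ((c l).val : ℂ) * ((k l).val : ℂ)))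

open Finset

theorem sum_lt_add_swap_add_sum_diag {ι M : Type*} [Fintype ι] [LinearOrder ι] [AddCommMonoid M]
    (g : ι → ι → M) :
    ∑ p ∈ univ.filter (fun p : ι × ι => p.1 < p.2), (g p.1 p.2 + g p.2 p.1) + ∑ l, g l l =
      ∑ l, ∑ m, g l m := by
  have split : ∀ l m, g l m =
      ((if l < m then g l m else 0) + if m < l then g l m else 0) + if l = m then g l m else 0 := by
    intro l m
    rcases lt_trichotomy l m with h | rfl | h
    · simp [h, h.ne, h.not_gt]
    · simp
    · simp [h, h.ne', h.not_gt]
  rw [sum_filter, Fintype.sum_prod_type,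
    sum_congr rfl fun l _ => sum_congr rfl fun m _ => split l m]
  simp only [sum_add_distrib, sum_ite_eq, mem_univ, if_true, ite_add_zero]
  rw [sum_comm (f := fun l m => if m < l then g l m else 0)]

theorem AddChar.sum_apply_dotProduct_eq_zero {ι R R' : Type*} [Fintype ι] [DecidableEq ι]
    [CommRing R] [Fintype R] [CommRing R'] [IsDomain R'] {ψ : AddChar R R'}
    (hψ : Function.Injective ψ) {a : ι → R} (ha : a ≠ 0) :
    ∑ k : ι → R, ψ (a ⬝ᵥ k) = 0 := by
  obtain ⟨l, hl⟩ := Function.ne_iff.1 ha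
  let φ : AddChar (ι → R) R' := ψ.compAddMonoidHom (AddMonoidHom.mk' (a ⬝ᵥ ·) (dotProduct_add a))
  have hφ : φ ≠ 1 := fun h => hl <| hψ <| by
    simpa [φ, ψ.map_zero_eq_one] using DFunLike.congr_fun h (Pi.single l 1)
  exact AddChar.sum_eq_zero_of_ne_one hφ

theorem eq_zero_of_single_add_smul_add_eq_zero {ι R : Type*} [DecidableEq ι] [CommRing R]
    {S T : Finset ι} (hST : Disjoint S T) {i : ι} (hi : i ∈ S) {w d : ι → R}
    (hw : IsUnit (∑ l ∈ T, w l)) (hdS : ∑ l ∈ S, d l = 0) (hdT : ∑ l ∈ T, d l = 0) {μ ν : R}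
    (h : Pi.single i ν + μ • w + d = 0) : μ = 0 ∧ ν = 0 := by
  have hsum : ∀ U : Finset ι, (if i ∈ U then ν else 0) + μ * ∑ l ∈ U, w l + ∑ l ∈ U, d l = 0 :=
    fun U => by simpa [sum_add_distrib, mul_sum] using congr_arg (fun f => ∑ l ∈ U, f l) h
  have hμ : μ = 0 :=
    hw.mul_left_eq_zero.1 (by simpa [disjoint_left.1 hST hi, hdT] using hsum T)
  exact ⟨hμ, by simpa [hi, hdS, hμ] using hsum S⟩

section edgeForm

variable {ι R : Type*} [Fintype ι] [LinearOrder ι] [CommRing R]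

def edgeForm (A : ι → ι → R) (k : ι → R) : R :=
  ∑ p ∈ univ.filter (fun p : ι × ι => p.1 < p.2), A p.1 p.2 * k p.1 * k p.2

theorem edgeForm_add_single {A : ι → ι → R} (hA : ∀ l m, A l m = A m l)
    (hdiag : ∀ l, A l l = 0) (k : ι → R) (i : ι) (μ : R) :
    edgeForm A (k + Pi.single i μ) = edgeForm A k + μ * (A i ⬝ᵥ k) := by
  set s : ι → R := Pi.single i μ with hs
  have hpair : ∀ p ∈ univ.filter (fun p : ι × ι => p.1 < p.2),
      A p.1 p.2 * (k + s) p.1 * (k + s) p.2 =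
        A p.1 p.2 * k p.1 * k p.2 + (A p.1 p.2 * s p.1 * k p.2 + A p.2 p.1 * s p.2 * k p.1) := by
    rintro ⟨l, m⟩ hlm
    have hss : s l * s m = 0 := by
      rcases eq_or_ne l i with rfl | hl
      · simp [s, (mem_filter.1 hlm).2.ne']
      · simp [s, hl]
    simp only [Pi.add_apply, hA m l]
    linear_combination A l m * hss
  have hcross : ∑ l, ∑ m, A l m * s l * k m = μ * (A i ⬝ᵥ k) := by
    rw [← single_dotProduct (v := fun l => A l ⬝ᵥ k), ← hs, dotProduct]
    refine sum_congr rfl fun l _ => ?_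
    rw [dotProduct, mul_sum]
    exact sum_congr rfl fun m _ => by ring
  rw [edgeForm, sum_congr rfl hpair, sum_add_distrib, ← edgeForm, ← hcross,
    ← sum_lt_add_swap_add_sum_diag]
  simp [hdiag]

end edgeForm

section graphBasisVec

variable {D n : ℕ} [NeZero D]

theorem exp_natCast_eq_stdAddChar (N : ℕ) :
    Complex.exp ((2 * (Real.pi : ℂ) * Complex.I / (D : ℂ)) * (N : ℂ)) =
      ZMod.stdAddChar (N : ZMod D) := by
  rw [ZMod.stdAddChar_apply, ZMod.toCircle_natCast]
  ring_nf

theorem exp_val_eq_stdAddChar (x : ZMod D) :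
    Complex.exp ((2 * (Real.pi : ℂ) * Complex.I / (D : ℂ)) * (x.val : ℂ)) =
      ZMod.stdAddChar x := by
  rw [exp_natCast_eq_stdAddChar, ZMod.natCast_zmod_val]

theorem graphBasisVec_eq_stdAddChar (Γ : Fin n → Fin n → ℕ) (c k : Fin n → ZMod D) :
    graphBasisVec D n Γ c k =
      ZMod.stdAddChar (edgeForm (fun l m => (Γ l m : ZMod D)) k + c ⬝ᵥ k) := by
  have hcast : (∑ p ∈ univ.filter (fun p : Fin n × Fin n => p.1 < p.2),
        (Γ p.1 p.2 : ℂ) * ((k p.1).val : ℂ) * ((k p.2).val : ℂ)) +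
      ∑ l, ((c l).val : ℂ) * ((k l).val : ℂ) =
      ((∑ p ∈ univ.filter (fun p : Fin n × Fin n => p.1 < p.2),
        Γ p.1 p.2 * (k p.1).val * (k p.2).val + ∑ l, (c l).val * (k l).val : ℕ) : ℂ) := by
    push_cast
    rfl
  rw [graphBasisVec, hcast, exp_natCast_eq_stdAddChar]
  push_cast [ZMod.natCast_zmod_val]
  rfl

theorem conj_graphBasisVec_mul_pauli_eq {Γ : Fin n → Fin n → ℕ}
    (hsymm : ∀ l m, Γ l m = Γ m l) (hdiag : ∀ l, Γ l l = 0) (c c' k : Fin n → ZMod D)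
    (i : Fin n) (μ ν : ZMod D) :
    (starRingEnd ℂ) (graphBasisVec D n Γ c' k) *
        Complex.exp ((2 * (Real.pi : ℂ) * Complex.I / (D : ℂ)) * (((ν * (k i + μ)).val : ℂ))) *
        graphBasisVec D n Γ c (k + Pi.single i μ) =
      ZMod.stdAddChar (ν * μ + c i * μ) *
        ZMod.stdAddChar ((Pi.single i ν + μ • (fun m => (Γ i m : ZMod D)) + (c - c')) ⬝ᵥ k) := by
  rw [graphBasisVec_eq_stdAddChar, graphBasisVec_eq_stdAddChar, exp_val_eq_stdAddChar,
    ← AddChar.map_neg_eq_conj, ← AddChar.map_add_eq_mul, ← AddChar.map_add_eq_mul,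
    ← AddChar.map_add_eq_mul, edgeForm_add_single (by simp [hsymm]) (by simp [hdiag])]
  congr 1
  simp only [dotProduct_add, add_dotProduct, sub_dotProduct, smul_dotProduct, single_dotProduct,
    dotProduct_single, smul_eq_mul]
  ring

end graphBasisVec

theorem partition_theorem_general (D n : ℕ) [NeZero D]
    (Γ : Fin n → Fin n → ℕ) (hsymm : ∀ l m, Γ l m = Γ m l) (hdiag : ∀ l, Γ l l = 0)
    (V₁ V₂ : Finset (Fin n)) (hdisj : Disjoint V₁ V₂)
    (hunion : V₁ ∪ V₂ = Finset.univ)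
    (hcop1 : ∀ i ∈ V₁, Nat.Coprime (∑ j ∈ V₂, Γ i j) D)
    (hcop2 : ∀ j ∈ V₂, Nat.Coprime (∑ i ∈ V₁, Γ i j) D)
    (c c' : Fin n → ZMod D)
    (hc1 : ∑ i ∈ V₁, c i = 0) (hc2 : ∑ j ∈ V₂, c j = 0)
    (hc'1 : ∑ i ∈ V₁, c' i = 0) (hc'2 : ∑ j ∈ V₂, c' j = 0)
    (i : Fin n) (μ ν : ZMod D) (hμν : (μ, ν) ≠ ((0 : ZMod D), (0 : ZMod D))) :
    ∑ k : Fin n → ZMod D,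
      (starRingEnd ℂ) (graphBasisVec D n Γ c' k) *
        Complex.exp ((2 * (Real.pi : ℂ) * Complex.I / (D : ℂ)) *
          (((ν * (k i + μ)).val : ℂ))) *
        graphBasisVec D n Γ c (k + fun m => if m = i then μ else 0) = 0 := by
  set a := Pi.single i ν + μ • (fun m => (Γ i m : ZMod D)) + (c - c')
  have hrow : ∀ T : Finset (Fin n), Nat.Coprime (∑ j ∈ T, Γ i j) D →
      IsUnit (∑ j ∈ T, (Γ i j : ZMod D)) := fun T hT => by
    simpa using (ZMod.isUnit_iff_coprime _ D).2 hT
  have ha : a ≠ 0 := by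
    intro h
    refine hμν (Prod.ext_iff.2 ?_)
    rcases mem_union.1 (hunion ▸ mem_univ i) with hi | hi
    · exact eq_zero_of_single_add_smul_add_eq_zero hdisj hi (hrow V₂ (hcop1 i hi))
        (by simp [sum_sub_distrib, hc1, hc'1]) (by simp [sum_sub_distrib, hc2, hc'2]) h
    · refine eq_zero_of_single_add_smul_add_eq_zero hdisj.symm hi (hrow V₁ ?_)
        (by simp [sum_sub_distrib, hc2, hc'2]) (by simp [sum_sub_distrib, hc1, hc'1]) h
      simpa only [hsymm i] using hcop2 i hi
  have hshift : (fun m => if m = i then μ else 0) = Pi.single i μ := by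
    ext m
    simp [Pi.single_apply]
  simp_rw [hshift, conj_graphBasisVec_mul_pauli_eq hsymm hdiag]
  rw [← mul_sum, AddChar.sum_apply_dotProduct_eq_zero ZMod.injective_stdAddChar ha, mul_zero]

/-- Partition theorem: under the coprimality conditions on the bipartition `V₁, V₂`,
for any two codewords `c, c'` and any nontrivial one-site Pauli `X_i^μ Z_i^ν`, the
matrix element between the graph basis vectors `v_{c'}` and `X_i^μ Z_i^ν v_c`
vanishes, so the codeword graph basis states span a nondegenerate distance-2 code. -/
theorem partition_theorem (D n : ℕ) [NeZero D] (hD : 2 ≤ D) (hn : 2 ≤ n)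
    (Γ : Fin n → Fin n → ℕ) (hsymm : ∀ l m, Γ l m = Γ m l) (hdiag : ∀ l, Γ l l = 0)
    (V₁ V₂ : Finset (Fin n)) (hdisj : Disjoint V₁ V₂)
    (h1 : V₁.Nonempty) (h2 : V₂.Nonempty) (hunion : V₁ ∪ V₂ = Finset.univ)
    (hcop1 : ∀ i ∈ V₁, Nat.Coprime (∑ j ∈ V₂, Γ i j) D)
    (hcop2 : ∀ j ∈ V₂, Nat.Coprime (∑ i ∈ V₁, Γ i j) D)
    (c c' : Fin n → ZMod D)
    (hc1 : ∑ i ∈ V₁, c i = 0) (hc2 : ∑ j ∈ V₂, c j = 0)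
    (hc'1 : ∑ i ∈ V₁, c' i = 0) (hc'2 : ∑ j ∈ V₂, c' j = 0)
    (i : Fin n) (μ ν : ZMod D) (hμν : (μ, ν) ≠ ((0 : ZMod D), (0 : ZMod D))) :
    ∑ k : Fin n → ZMod D,
      (starRingEnd ℂ) (graphBasisVec D n Γ c' k) *
        Complex.exp ((2 * (Real.pi : ℂ) * Complex.I / (D : ℂ)) *
          (((ν * (k i + μ)).val : ℂ))) *
        graphBasisVec D n Γ c (k + fun m => if m = i then μ else 0) = 0 :=
  partition_theorem_general D n Γ hsymm hdiag V₁ V₂ hdisj hunion hcop1 hcop2 c c' hc1 hc2 hc'1 hc'2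
    i μ ν hμν
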